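/- The map f_1 preserves Lebesgue measure on [0,1]: the pushforward under f_1 of Lebesgue measure restricted to [0,1] equals Lebesgue measure restricted to [0,1]. -/

import Mathlib

open Set MeasureTheory

/-- The piecewise-affine `b`-branched sawtooth map on `[0,1]`:
`g1 b x = b*x - k` on `[k/b,(k+1)/b]` for `k ∈ {0,…,b-1}` even, and
`g1 b x = (k+1) - b*x` there for `k` odd.  (For `x ∈ [0,1]`, the index
`k = min ⌊b*x⌋ (b-1)` is exactly the branch index; at common endpoints of two
branches both formulas agree, so this agrees with the piecewise definition.) -/
noncomputable def g1 (b : ℕ) (x : ℝ) : ℝ :=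
  let k : ℤ := min ⌊(b : ℝ) * x⌋ ((b : ℤ) - 1)
  if Even k then (b : ℝ) * x - (k : ℝ) else ((k : ℝ) + 1) - (b : ℝ) * x

/-- For `x ∈ I_n = (2^{-n}, 2^{-n+1}]` (with `n ≥ 1`), `nIdx x = n`. -/
noncomputable def nIdx (x : ℝ) : ℕ := (⌊Real.logb 2 x⁻¹⌋ + 1).toNat

/-- The map `f_1 : [0,1] → [0,1]`: on each interval `I_n = (2^{-n}, 2^{-n+1}]` it is
`A_n⁻¹ ∘ g_{1,2n+1} ∘ A_n`, where `A_n x = 2^n x - 1`, and `f_1 0 = 0`. -/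
noncomputable def f1 (x : ℝ) : ℝ :=
  if x ≤ 0 then 0
  else (g1 (2 * nIdx x + 1) ((2 : ℝ) ^ nIdx x * x - 1) + 1) / (2 : ℝ) ^ nIdx x

lemma measurable_g1 (b : ℕ) : Measurable (g1 b) := by
  have hk : Measurable fun x : ℝ => min ⌊(b : ℝ) * x⌋ ((b : ℤ) - 1) :=
    (Int.measurable_floor.comp (measurable_const_mul _)).min measurable_const
  have hkr : Measurable fun x : ℝ => ((min ⌊(b : ℝ) * x⌋ ((b : ℤ) - 1) : ℤ) : ℝ) :=
    (measurable_of_countable (Int.cast : ℤ → ℝ)).comp hk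
  unfold g1
  exact Measurable.ite (hk (MeasurableSet.of_discrete (s := {k : ℤ | Even k})))
    ((measurable_const_mul _).sub hkr)
    ((hkr.add measurable_const).sub (measurable_const_mul _))

lemma map_mul_add (a c : ℝ) (ha : a ≠ 0) :
    Measure.map (fun x => a * x + c) volume = ENNReal.ofReal |a⁻¹| • volume := by
  have : (fun x : ℝ => a * x + c) = (fun y => y + c) ∘ (fun x => a * x) := rfl
  rw [this, ← Measure.map_map (measurable_add_const c) (measurable_const_mul a),
    Real.map_volume_mul_left ha, Measure.map_smul, map_add_right_eq_self]

lemma g1_idx {b k : ℕ} (hk : k < b) {x : ℝ}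
    (hx : x ∈ Ico ((k : ℝ)/b) (((k : ℝ)+1)/b)) :
    min ⌊(b : ℝ) * x⌋ ((b : ℤ) - 1) = (k : ℤ) := by
  have hb : (0:ℝ) < b := by exact_mod_cast hk.trans_le' (Nat.zero_le k)
  obtain ⟨h1, h2⟩ := hx
  have hf : ⌊(b : ℝ) * x⌋ = (k : ℤ) := by
    rw [Int.floor_eq_iff]
    rw [div_le_iff₀ hb] at h1
    rw [lt_div_iff₀ hb] at h2
    push_cast
    constructor <;> nlinarith
  rw [hf]
  exact min_eq_left (by omega)

lemma map_g1_branch (b k : ℕ) (hk : k < b) :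
    Measure.map (g1 b) (volume.restrict (Ico ((k : ℝ)/b) (((k : ℝ)+1)/b)))
      = ENNReal.ofReal ((b : ℝ))⁻¹ • volume.restrict (Icc (0:ℝ) 1) := by
  have hb : (0:ℝ) < b := by exact_mod_cast hk.trans_le' (Nat.zero_le k)
  set s : Set ℝ := Ico ((k : ℝ)/b) (((k : ℝ)+1)/b) with hs
  by_cases hke : Even (k : ℤ)
  · have heq : g1 b =ᵐ[volume.restrict s] fun x => (b : ℝ) * x + (-(k : ℝ)) := by
      refine (ae_restrict_mem measurableSet_Ico).mono fun x hx => ?_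
      simp only [g1, g1_idx hk hx, if_pos hke]
      push_cast
      ring
    have hpre : s = (fun x => (b : ℝ) * x + (-(k : ℝ))) ⁻¹' (Ico 0 1) := by
      ext x
      simp only [hs, mem_Ico, mem_preimage, le_add_neg_iff_add_le, zero_add,
        div_le_iff₀ hb, lt_div_iff₀ hb]
      constructor <;> rintro ⟨h1, h2⟩ <;> constructor <;> nlinarith
    rw [Measure.map_congr heq, hpre,
      ← Measure.restrict_map (by fun_prop) measurableSet_Ico,
      map_mul_add _ _ hb.ne', Measure.restrict_smul,
      Measure.restrict_congr_set Ico_ae_eq_Icc, abs_of_pos (by positivity)]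
  · have heq : g1 b =ᵐ[volume.restrict s] fun x => -(b : ℝ) * x + ((k : ℝ) + 1) := by
      refine (ae_restrict_mem measurableSet_Ico).mono fun x hx => ?_
      simp only [g1, g1_idx hk hx, if_neg hke]
      push_cast
      ring
    have hpre : s = (fun x => -(b : ℝ) * x + ((k : ℝ) + 1)) ⁻¹' (Ioc 0 1) := by
      ext x
      simp only [hs, mem_Ico, mem_preimage, mem_Ioc,
        div_le_iff₀ hb, lt_div_iff₀ hb]
      constructor <;> rintro ⟨h1, h2⟩ <;> constructor <;> nlinarith
    rw [Measure.map_congr heq, hpre,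
      ← Measure.restrict_map (by fun_prop) measurableSet_Ioc,
      map_mul_add _ _ (by simpa using hb.ne'), Measure.restrict_smul,
      Measure.restrict_congr_set Ioc_ae_eq_Icc]
    congr 1
    rw [abs_of_neg (by simp [hb])]
    rw [inv_neg, neg_neg]

lemma map_g1_Icc (b : ℕ) (hb : 0 < b) :
    Measure.map (g1 b) (volume.restrict (Icc (0:ℝ) 1)) = volume.restrict (Icc (0:ℝ) 1) := by
  have hbR : (0:ℝ) < b := by exact_mod_cast hb
  have hunion : Ico (0:ℝ) 1 = ⋃ k : Fin b, Ico ((k:ℝ)/b) (((k:ℝ)+1)/b) := by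
    ext x
    simp only [mem_Ico, mem_iUnion]
    constructor
    · rintro ⟨h0, h1⟩
      have hf0 : (0:ℤ) ≤ ⌊(b:ℝ)*x⌋ := Int.floor_nonneg.2 (by positivity)
      have hfb : ⌊(b:ℝ)*x⌋ < (b:ℤ) := by
        have : (b:ℝ)*x < b := by nlinarith
        exact Int.floor_lt.2 (by exact_mod_cast this)
      have hcast : ((⌊(b:ℝ)*x⌋.toNat : ℕ) : ℝ) = (⌊(b:ℝ)*x⌋ : ℝ) := by
        exact_mod_cast Int.toNat_of_nonneg hf0
      refine ⟨⟨⌊(b:ℝ)*x⌋.toNat, by omega⟩, ?_, ?_⟩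
      · rw [div_le_iff₀ hbR, hcast]
        nlinarith [Int.floor_le ((b:ℝ)*x)]
      · rw [lt_div_iff₀ hbR, hcast]
        nlinarith [Int.lt_floor_add_one ((b:ℝ)*x)]
    · rintro ⟨k, h1, h2⟩
      have hk1 : ((k:ℕ):ℝ) + 1 ≤ b := by exact_mod_cast k.2
      constructor
      · exact le_trans (by positivity) h1
      · exact h2.trans_le (by rw [div_le_one hbR]; exact hk1)
  have hdisj : Pairwise (Function.onFun Disjoint fun k : Fin b => Ico ((k:ℝ)/b) (((k:ℝ)+1)/b)) := by
    have key : ∀ k l : Fin b, (k:ℕ) < (l:ℕ) →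
        Disjoint (Ico ((k:ℝ)/b) (((k:ℝ)+1)/b)) (Ico ((l:ℝ)/b) (((l:ℝ)+1)/b)) := by
      intro k l hkl
      rw [Set.Ico_disjoint_Ico]
      have h1 : ((k:ℕ):ℝ) + 1 ≤ (l:ℕ) := by exact_mod_cast hkl
      have : ((k:ℝ)+1)/b ≤ (l:ℝ)/b := by gcongr
      exact le_trans (min_le_left _ _) (this.trans (le_max_right _ _))
    intro k l hne
    rcases Nat.lt_or_ge k l with h | h
    · exact key k l h
    · exact (key l k (lt_of_le_of_ne h (fun hc => hne (Fin.ext hc.symm)))).symm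
  conv_lhs => rw [← Measure.restrict_congr_set Ico_ae_eq_Icc, hunion,
    Measure.restrict_iUnion hdisj (fun k => measurableSet_Ico)]
  rw [Measure.map_sum (measurable_g1 b).aemeasurable]
  have : (fun k : Fin b => Measure.map (g1 b) (volume.restrict (Ico ((k:ℝ)/b) (((k:ℝ)+1)/b))))
      = fun _ : Fin b => ENNReal.ofReal ((b:ℝ))⁻¹ • volume.restrict (Icc (0:ℝ) 1) := by
    funext k
    exact map_g1_branch b k k.2
  rw [this, Measure.sum_fintype, Finset.sum_const, Finset.card_univ, Fintype.card_fin,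
    ← Nat.cast_smul_eq_nsmul ENNReal, smul_smul, ← ENNReal.ofReal_natCast,
    ← ENNReal.ofReal_mul (by positivity), mul_inv_cancel₀ hbR.ne', ENNReal.ofReal_one, one_smul]


/-- `In n = (2^{-(n+1)}, 2^{-n}]`, i.e. `I_{n+1}` in the informal indexing. -/
def In (n : ℕ) : Set ℝ := Ioc (((2:ℝ)^(n+1))⁻¹) (((2:ℝ)^n)⁻¹)

lemma mem_In_iff {x : ℝ} (hx : 0 < x) (n : ℕ) :
    x ∈ In n ↔ (2:ℝ)^n ≤ x⁻¹ ∧ x⁻¹ < 2^(n+1) := by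
  have h1 : (0:ℝ) < 2^n := by positivity
  have h2 : (0:ℝ) < 2^(n+1) := by positivity
  constructor
  · rintro ⟨ha, hb⟩
    constructor
    · rw [← inv_inv ((2:ℝ)^n)]
      exact inv_anti₀ hx hb
    · rw [← inv_inv ((2:ℝ)^(n+1))]
      exact inv_strictAnti₀ (by positivity) ha
  · rintro ⟨ha, hb⟩
    constructor
    · rw [← inv_inv x]
      exact inv_strictAnti₀ (by positivity) hb
    · rw [← inv_inv x]
      exact inv_anti₀ h1 ha

lemma nIdx_eq_of_mem {x : ℝ} {n : ℕ} (hx : 0 < x) (hmem : x ∈ In n) :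
    nIdx x = n + 1 := by
  obtain ⟨ha, hb⟩ := (mem_In_iff hx n).1 hmem
  have hxi : (0:ℝ) < x⁻¹ := by positivity
  have hfl : ⌊Real.logb 2 x⁻¹⌋ = (n : ℤ) := by
    rw [Int.floor_eq_iff]
    constructor
    · rw [Real.le_logb_iff_rpow_le one_lt_two hxi]
      push_cast
      rw [Real.rpow_natCast]
      exact ha
    · rw [Real.logb_lt_iff_lt_rpow one_lt_two hxi]
      have : ((n:ℤ):ℝ) + 1 = ((n+1 : ℕ):ℝ) := by push_cast; ring
      rw [this, Real.rpow_natCast]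
      exact hb
  rw [nIdx, hfl]
  omega

lemma iUnion_In : ⋃ n, In n = Ioc (0:ℝ) 1 := by
  ext x
  simp only [mem_iUnion, mem_Ioc]
  constructor
  · rintro ⟨n, h1, h2⟩
    have h0 : (0:ℝ) < x := lt_trans (by positivity) h1
    refine ⟨h0, h2.trans ?_⟩
    rw [inv_le_one_iff₀]
    right
    exact one_le_pow₀ one_le_two
  · rintro ⟨h0, h1⟩
    have hxi : (1:ℝ) ≤ x⁻¹ := (one_le_inv₀ h0).2 h1
    obtain ⟨n, hn⟩ := pow_unbounded_of_one_lt x⁻¹ one_lt_two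
    have hex : ∃ m : ℕ, x⁻¹ < 2^(m+1) := ⟨n, lt_of_lt_of_le hn (by
      apply pow_le_pow_right₀ one_le_two; omega)⟩
    classical
    let m := Nat.find hex
    refine ⟨m, (mem_In_iff h0 m).2 ⟨?_, Nat.find_spec hex⟩⟩
    rcases Nat.eq_zero_or_pos m with hm | hm
    · rw [hm]; simpa using hxi
    · have := Nat.find_min hex (m := m - 1) (by omega)
      push_neg at this
      have : (2:ℝ)^(m-1+1) ≤ x⁻¹ := this
      calc (2:ℝ)^m = 2^(m-1+1) := by congr 1; omega
      _ ≤ x⁻¹ := this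

lemma disjoint_In : Pairwise (Function.onFun Disjoint In) := by
  have key : ∀ m n : ℕ, m < n → Disjoint (In m) (In n) := by
    intro m n hmn
    rw [In, In, Set.Ioc_disjoint_Ioc]
    refine le_trans (min_le_right _ _) (le_trans ?_ (le_max_left _ _))
    apply inv_anti₀ (by positivity)
    apply pow_le_pow_right₀ one_le_two
    omega
  intro m n hmn
  rcases Nat.lt_or_ge m n with h | h
  · exact key m n h
  · exact (key n m (lt_of_le_of_ne h (Ne.symm hmn))).symm

lemma measurable_nIdx : Measurable nIdx := by
  have h1 : Measurable fun x : ℝ => Real.logb 2 x⁻¹ := by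
    simp only [Real.logb]
    exact ((Real.measurable_log.comp measurable_inv).div_const _)
  exact (measurable_of_countable (fun z : ℤ => (z + 1).toNat)).comp
    (Int.measurable_floor.comp h1)

lemma measurable_f1 : Measurable f1 := by
  have hG : Measurable fun p : ℝ × ℕ =>
      (g1 (2 * p.2 + 1) ((2 : ℝ) ^ p.2 * p.1 - 1) + 1) / (2 : ℝ) ^ p.2 := by
    apply measurable_from_prod_countable_left
    intro n
    show Measurable fun x : ℝ => (g1 (2 * n + 1) ((2 : ℝ) ^ n * x - 1) + 1) / (2 : ℝ) ^ n
    exact (((measurable_g1 _).comp ((measurable_const_mul _).sub_const 1)).add_const 1).div_const _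
  have h2 : Measurable fun x : ℝ =>
      (g1 (2 * nIdx x + 1) ((2 : ℝ) ^ nIdx x * x - 1) + 1) / (2 : ℝ) ^ nIdx x := by
    have h3 := hG.comp (measurable_id.prodMk measurable_nIdx)
    simp only [Function.comp_def, id] at h3
    exact h3
  unfold f1
  exact Measurable.ite measurableSet_Iic measurable_const h2

lemma map_f1_In (n : ℕ) :
    Measure.map f1 (volume.restrict (In n)) = volume.restrict (In n) := by
  obtain ⟨m, hm⟩ : ∃ m, m = n + 1 := ⟨_, rfl⟩
  obtain ⟨c, hc, hcpos⟩ : ∃ c : ℝ, c = 2 ^ m ∧ (0:ℝ) < c := ⟨_, rfl, by positivity⟩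
  have hcinv : c * c⁻¹ = 1 := mul_inv_cancel₀ hcpos.ne'
  have hIn : In n = Ioc c⁻¹ (2 * c⁻¹) := by
    rw [In, hc, hm]
    congr 1
    rw [pow_succ, mul_inv]
    ring
  have hA : Measurable fun x : ℝ => c * x + (-1) := by fun_prop
  have hB : Measurable fun y : ℝ => c⁻¹ * y + c⁻¹ := by fun_prop
  have heq : f1 =ᵐ[volume.restrict (In n)]
      (fun y => c⁻¹ * y + c⁻¹) ∘ (g1 (2*m+1)) ∘ (fun x => c * x + (-1)) := by
    have hms : MeasurableSet (In n) := by unfold In; exact measurableSet_Ioc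
    refine (ae_restrict_mem hms).mono fun x hx => ?_
    have hx0 : 0 < x := lt_trans (by positivity) hx.1
    have hnx : nIdx x = m := hm ▸ nIdx_eq_of_mem hx0 hx
    simp only [f1, hnx, if_neg (not_le.2 hx0), Function.comp, ← hc]
    rw [sub_eq_add_neg]
    field_simp
  have hpreA : In n = (fun x : ℝ => c * x + (-1)) ⁻¹' (Ioc 0 1) := by
    rw [hIn]
    ext x
    simp only [mem_Ioc, mem_preimage]
    constructor
    · rintro ⟨h1, h2⟩
      constructor
      · nlinarith [mul_lt_mul_of_pos_left h1 hcpos]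
      · nlinarith [mul_le_mul_of_nonneg_left h2 hcpos.le]
    · rintro ⟨h1, h2⟩
      have hci : (0:ℝ) < c⁻¹ := by positivity
      constructor
      · nlinarith [mul_lt_mul_of_pos_left h1 hci]
      · nlinarith [mul_le_mul_of_nonneg_left h2 hci.le]
  have hpreB : Ioc (0:ℝ) 1 = (fun y : ℝ => c⁻¹ * y + c⁻¹) ⁻¹' (In n) := by
    rw [hIn]
    ext y
    have hci : (0:ℝ) < c⁻¹ := by positivity
    simp only [mem_Ioc, mem_preimage]
    constructor
    · rintro ⟨h1, h2⟩
      constructor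
      · nlinarith [mul_lt_mul_of_pos_left h1 hci]
      · nlinarith [mul_le_mul_of_nonneg_left h2 hci.le]
    · rintro ⟨h1, h2⟩
      constructor
      · nlinarith
      · nlinarith [mul_le_mul_of_nonneg_left h2 hcpos.le]
  have s1 : Measure.map (fun x : ℝ => c * x + (-1)) (volume.restrict (In n))
      = ENNReal.ofReal c⁻¹ • volume.restrict (Icc (0:ℝ) 1) := by
    conv_lhs => rw [hpreA]
    rw [← Measure.restrict_map hA measurableSet_Ioc, map_mul_add c (-1) hcpos.ne',
      Measure.restrict_smul, Measure.restrict_congr_set Ioc_ae_eq_Icc,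
      abs_of_pos (inv_pos.2 hcpos)]
  have s3 : Measure.map (fun y : ℝ => c⁻¹ * y + c⁻¹) (volume.restrict (Icc (0:ℝ) 1))
      = ENNReal.ofReal c • volume.restrict (In n) := by
    rw [← Measure.restrict_congr_set Ioc_ae_eq_Icc]
    conv_lhs => rw [hpreB]
    rw [← Measure.restrict_map hB (by rw [hIn]; exact measurableSet_Ioc),
      map_mul_add c⁻¹ c⁻¹ (by positivity), Measure.restrict_smul, inv_inv,
      abs_of_pos hcpos]
  rw [Measure.map_congr heq,
    ← Measure.map_map hB ((measurable_g1 _).comp hA),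
    ← Measure.map_map (measurable_g1 _) hA, s1, Measure.map_smul,
    map_g1_Icc (2*m+1) (by omega), Measure.map_smul, s3, smul_smul,
    ← ENNReal.ofReal_mul (by positivity), inv_mul_cancel₀ hcpos.ne',
    ENNReal.ofReal_one, one_smul]


/-- The map `f_1` preserves Lebesgue measure on `[0,1]`. -/
theorem f1_preserves_lebesgue :
    Measure.map f1 (volume.restrict (Set.Icc (0 : ℝ) 1))
      = volume.restrict (Set.Icc (0 : ℝ) 1) := by
  have hms : ∀ n, MeasurableSet (In n) := fun n => by unfold In; exact measurableSet_Ioc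
  have hsum : volume.restrict (Set.Icc (0 : ℝ) 1)
      = Measure.sum (fun n => volume.restrict (In n)) := by
    rw [← Measure.restrict_congr_set Ioc_ae_eq_Icc, ← iUnion_In,
      Measure.restrict_iUnion disjoint_In hms]
  conv_lhs => rw [hsum]
  rw [Measure.map_sum measurable_f1.aemeasurable]
  simp_rw [map_f1_In]
  exact hsum.symm
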